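/- arXiv:2509.05255 — 2 statements merged into one kernel-verified Lean document; each statement's English description precedes it below -/
import Mathlib

section
/- Let $n \geq 3$, $s \in (0,2)$ and $G(X) = \frac{1}{(n-2)\omega_{n-1}}|X|^{2-n}$ the fundamental solution of the Laplacian on $\mathbb{R}^n$. Then for every $\delta > 0$, $-\int_{\partial B(0,\delta)} \partial_\nu U\, d\sigma + \int_{\mathbb{R}^n \setminus B(0,\delta)} \frac{U^{2^*(s)-1}}{|X|^s}\, dX$ is independent of $\delta$ and equals $(n-2)\,\omega_{n-1}\,\mathfrak{b}_{n,s}^{-(n-2)/(2-s)}$, where $U(X) = (1+\mathfrak{b}_{n,s}|X|^{2-s})^{-(n-2)/(2-s)}$, $\mathfrak{b}_{n,s} = 1/((n-s)(n-2))$, $2^*(s) = 2(n-s)/(n-2)$, and $\nu$ is the outer unit normal on $\partial B(0,\delta)$. -/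
open MeasureTheory Real Metric Filter RealInnerProductSpace

/-- Euclidean Laplacian `Δu = ∑ ∂ᵢᵢ u` (without the minus sign). -/
noncomputable def lap {n : ℕ} (u : EuclideanSpace ℝ (Fin n) → ℝ) (x : EuclideanSpace ℝ (Fin n)) : ℝ :=
  ∑ i, fderiv ℝ (fun y => fderiv ℝ u y (EuclideanSpace.single i 1)) x (EuclideanSpace.single i 1)

/-- The constant `𝔟_{n,s} = 1/((n-s)(n-2))`. -/
noncomputable def bns (n : ℕ) (s : ℝ) : ℝ := 1 / (((n : ℝ) - s) * ((n : ℝ) - 2))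

/-- The standard Hardy–Sobolev bubble `U(X) = (1 + 𝔟_{n,s}|X|^{2-s})^{-(n-2)/(2-s)}`. -/
noncomputable def bubble (n : ℕ) (s : ℝ) (X : EuclideanSpace ℝ (Fin n)) : ℝ :=
  (1 + bns n s * ‖X‖ ^ (2 - s)) ^ (-(((n : ℝ) - 2) / (2 - s)))

/-- The critical Hardy–Sobolev exponent `2^*(s) = 2(n-s)/(n-2)`. -/
noncomputable def crits (n : ℕ) (s : ℝ) : ℝ := 2 * ((n : ℝ) - s) / ((n : ℝ) - 2)

/-- Surface integral over the sphere `∂B(0,δ) ⊆ ℝⁿ`, parametrized by the unit sphere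
with its natural surface measure `volume.toSphere` and Jacobian `δ^{n-1}`. -/
noncomputable def sphereIntegral (n : ℕ) (δ : ℝ) (f : EuclideanSpace ℝ (Fin n) → ℝ) : ℝ :=
  δ ^ (n - 1) *
    ∫ σ : sphere (0 : EuclideanSpace ℝ (Fin n)) 1,
      f (δ • (σ : EuclideanSpace ℝ (Fin n))) ∂((volume : Measure (EuclideanSpace ℝ (Fin n))).toSphere)

/-- `ω_{n-1}`: the surface area of the unit sphere in `ℝⁿ`. -/
noncomputable def omegaS (n : ℕ) : ℝ :=
  (((volume : Measure (EuclideanSpace ℝ (Fin n))).toSphere) Set.univ).toReal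

lemma bns_pos (n : ℕ) (hn : 3 ≤ n) (s : ℝ) (hs2 : s < 2) : 0 < bns n s := by
  have h1 : (3:ℝ) ≤ (n:ℝ) := by exact_mod_cast hn
  have : 0 < ((n:ℝ) - s) := by linarith
  have : 0 < ((n:ℝ) - 2) := by linarith
  unfold bns; positivity

lemma aux_deriv (n : ℕ) (hn : 3 ≤ n) (s : ℝ) (hs0 : 0 < s) (hs2 : s < 2) {r : ℝ} (hr : 0 < r) :
    HasDerivAt (fun r : ℝ => ((n:ℝ)-2) * bns n s *
        (r ^ ((n:ℝ)-s) * (1 + bns n s * r ^ (2-s)) ^ (-(((n:ℝ)-s)/(2-s)))))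
      (r ^ ((n:ℝ)-1-s) * (1 + bns n s * r ^ (2-s)) ^ (-((((n:ℝ)+2-2*s))/(2-s)))) r := by
  have h3 : (3:ℝ) ≤ (n:ℝ) := by exact_mod_cast hn
  have hns : (0:ℝ) < (n:ℝ) - s := by linarith
  have hn2 : (0:ℝ) < (n:ℝ) - 2 := by linarith
  have h2s : (0:ℝ) < 2 - s := by linarith
  set b := bns n s with hbdef
  have hb : 0 < b := bns_pos n hn s hs2
  have hA : (0:ℝ) < 1 + b * r ^ (2-s) := by positivity
  set m : ℝ := ((n:ℝ)-s)/(2-s) with hmdef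
  have g1 : HasDerivAt (fun r : ℝ => r ^ ((n:ℝ)-s)) (((n:ℝ)-s) * r ^ ((n:ℝ)-s-1)) r :=
    Real.hasDerivAt_rpow_const (Or.inl hr.ne')
  have g2 : HasDerivAt (fun r : ℝ => r ^ (2-s)) ((2-s) * r ^ (2-s-1)) r :=
    Real.hasDerivAt_rpow_const (Or.inl hr.ne')
  have g3 : HasDerivAt (fun r : ℝ => 1 + b * r ^ (2-s)) (b * ((2-s) * r ^ (2-s-1))) r :=
    (g2.const_mul b).const_add 1
  have g4 := g3.rpow_const (p := -m) (Or.inl hA.ne')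
  have g5 := (g1.mul g4).const_mul (((n:ℝ)-2) * b)
  convert g5 using 1
  case e'_4 => rfl
  case e'_5 => rfl
  case e'_8 => rfl
  have e1 : (1 + b * r ^ (2-s)) ^ (-m) = (1 + b * r ^ (2-s)) ^ (-m-1) * (1 + b * r ^ (2-s)) := by
    rw [← Real.rpow_add_one hA.ne' (-m-1)]; ring_nf
  have e2 : r ^ ((n:ℝ)-s) * r ^ (2-s-1) = r ^ ((n:ℝ)-s-1) * r ^ (2-s) := by
    rw [← Real.rpow_add hr, ← Real.rpow_add hr]; ring_nf
  have e3 : -(((n:ℝ)+2-2*s)/(2-s)) = -m-1 := by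
    rw [hmdef]; field_simp; ring
  have e4 : r ^ ((n:ℝ)-1-s) = r ^ ((n:ℝ)-s-1) := by ring_nf
  have e5 : ((n:ℝ)-2) * b * ((n:ℝ)-s) = 1 := by
    rw [hbdef]; unfold bns; field_simp
  have hm2s : m * (2-s) = (n:ℝ)-s := by rw [hmdef]; field_simp
  rw [e3]
  linear_combination ((1 + b*r^(2-s))^(-m-1)) * e4
    - ((n:ℝ)-2)*b*((n:ℝ)-s)*(r^((n:ℝ)-s-1)) * e1
    + ((n:ℝ)-2)*b*b*(2-s)*m*((1 + b*r^(2-s))^(-m-1)) * e2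
    - (r^((n:ℝ)-s-1))*((1 + b*r^(2-s))^(-m-1)) * e5
    + ((n:ℝ)-2)*b*b*(r^((n:ℝ)-s-1))*(r^(2-s))*((1 + b*r^(2-s))^(-m-1)) * hm2s

lemma aux_tendsto (n : ℕ) (hn : 3 ≤ n) (s : ℝ) (hs0 : 0 < s) (hs2 : s < 2) :
    Tendsto (fun r : ℝ => ((n:ℝ)-2) * bns n s *
        (r ^ ((n:ℝ)-s) * (1 + bns n s * r ^ (2-s)) ^ (-(((n:ℝ)-s)/(2-s)))))
      atTop (nhds (((n:ℝ)-2) * bns n s ^ (-(((n:ℝ)-2)/(2-s))))) := by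
  have h3 : (3:ℝ) ≤ (n:ℝ) := by exact_mod_cast hn
  have hns : (0:ℝ) < (n:ℝ) - s := by linarith
  have h2s : (0:ℝ) < 2 - s := by linarith
  set b := bns n s with hbdef
  have hb : 0 < b := bns_pos n hn s hs2
  set m : ℝ := ((n:ℝ)-s)/(2-s) with hmdef
  have key : ∀ r : ℝ, 0 < r →
      ((n:ℝ)-2) * b * ((r ^ (s-2) + b) ^ (-m))
        = ((n:ℝ)-2) * b * (r ^ ((n:ℝ)-s) * (1 + b * r ^ (2-s)) ^ (-m)) := by
    intro r hr
    have hAeq : 1 + b * r ^ (2-s) = r ^ (2-s) * (r ^ (s-2) + b) := by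
      rw [mul_add, ← Real.rpow_add hr]
      norm_num; ring
    have hsb : (0:ℝ) ≤ r ^ (s-2) + b := by positivity
    rw [hAeq, Real.mul_rpow (Real.rpow_nonneg hr.le _) hsb,
      ← Real.rpow_mul hr.le,
      show (2-s)*(-m) = -((n:ℝ)-s) by rw [hmdef]; field_simp,
      ← mul_assoc (r ^ ((n:ℝ)-s)), ← Real.rpow_add hr]
    norm_num
  have t1 : Tendsto (fun r : ℝ => r ^ (s-2)) atTop (nhds 0) := by
    have := tendsto_rpow_neg_atTop h2s
    simpa [show -(2-s) = s-2 by ring] using this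
  have t2 : Tendsto (fun r : ℝ => r ^ (s-2) + b) atTop (nhds b) := by
    simpa using t1.add_const b
  have t3 : Tendsto (fun r : ℝ => (r ^ (s-2) + b) ^ (-m)) atTop (nhds (b ^ (-m))) :=
    t2.rpow_const (Or.inl hb.ne')
  have t4 := t3.const_mul (((n:ℝ)-2) * b)
  have hval : ((n:ℝ)-2) * b * b ^ (-m) = ((n:ℝ)-2) * b ^ (-(((n:ℝ)-2)/(2-s))) := by
    rw [show -(((n:ℝ)-2)/(2-s)) = -m + 1 by rw [hmdef]; field_simp; ring,
      Real.rpow_add_one hb.ne' (-m)]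
    ring
  rw [← hval]
  exact t4.congr' (by filter_upwards [eventually_gt_atTop 0] with r hr using key r hr)

lemma aux_inner (n : ℕ) (hn : 3 ≤ n) (s : ℝ) (hs0 : 0 < s) (hs2 : s < 2)
    {X : EuclideanSpace ℝ (Fin n)} (hX : X ≠ 0) :
    ⟪gradient (bubble n s) X, ‖X‖⁻¹ • X⟫ =
      -(((n:ℝ)-2) * bns n s * ‖X‖ ^ (1-s) *
        (1 + bns n s * ‖X‖ ^ (2-s)) ^ (-(((n:ℝ)-s)/(2-s)))) := by
  have h3 : (3:ℝ) ≤ (n:ℝ) := by exact_mod_cast hn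
  have hns : (0:ℝ) < (n:ℝ) - s := by linarith
  have h2s : (0:ℝ) < 2 - s := by linarith
  set b := bns n s with hbdef
  have hb : 0 < b := bns_pos n hn s hs2
  set q : ℝ := ((n:ℝ)-2)/(2-s) with hqdef
  have hr : 0 < ‖X‖ := norm_pos_iff.2 hX
  have hsq : (0:ℝ) < ‖X‖ ^ (2:ℝ) := Real.rpow_pos_of_pos hr 2
  have h2 : HasFDerivAt (fun x : EuclideanSpace ℝ (Fin n) => ‖x‖ ^ (2:ℝ))
      ((2 * ‖X‖ ^ ((2:ℝ)-2)) • innerSL ℝ X) X := hasFDerivAt_norm_rpow X one_lt_two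
  have h4 := ((h2.rpow_const (p := (2-s)/2) (Or.inl hsq.ne')).const_mul b).const_add 1
  have hA : (0:ℝ) < 1 + b * (‖X‖ ^ (2:ℝ)) ^ ((2-s)/2) := by positivity
  have h5 := h4.rpow_const (p := -q) (Or.inl hA.ne')
  have hfun : (fun x : EuclideanSpace ℝ (Fin n) =>
      (1 + b * (‖x‖ ^ (2:ℝ)) ^ ((2-s)/2)) ^ (-q)) = bubble n s := by
    funext x
    rw [bubble, ← Real.rpow_mul (norm_nonneg x), show (2:ℝ)*((2-s)/2) = 2-s by ring, hbdef, hqdef]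
  rw [hfun] at h5
  have hgrad : gradient (bubble n s) X = (InnerProductSpace.toDual ℝ _).symm
      ((-q * (1 + b * (‖X‖ ^ (2:ℝ)) ^ ((2-s)/2)) ^ (-q-1)) •
        ((b • (((2-s)/2 * (‖X‖ ^ (2:ℝ)) ^ ((2-s)/2 - 1)) • ((2 * ‖X‖ ^ ((2:ℝ)-2)) • innerSL ℝ X))))) := by
    rw [gradient, h5.fderiv]
  rw [hgrad, InnerProductSpace.toDual_symm_apply]
  simp only [ContinuousLinearMap.smul_apply, innerSL_apply_apply, smul_eq_mul]
  rw [real_inner_smul_right, real_inner_self_eq_norm_sq]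
  -- now pure scalar computation
  have e0 : ‖X‖ ^ ((2:ℝ)-2) = 1 := by rw [show (2:ℝ)-2 = 0 by ring, Real.rpow_zero]
  have e1 : (‖X‖ ^ (2:ℝ)) ^ ((2-s)/2 - 1) = ‖X‖ ^ (-s) := by
    rw [← Real.rpow_mul (norm_nonneg X), show (2:ℝ)*((2-s)/2-1) = -s by ring]
  have e2 : (‖X‖ ^ (2:ℝ)) ^ ((2-s)/2) = ‖X‖ ^ (2-s) := by
    rw [← Real.rpow_mul (norm_nonneg X), show (2:ℝ)*((2-s)/2) = 2-s by ring]
  have e3 : -q - 1 = -(((n:ℝ)-s)/(2-s)) := by rw [hqdef]; field_simp; ring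
  have e4 : ‖X‖ ^ (-s) * (‖X‖⁻¹ * ‖X‖ ^ 2) = ‖X‖ ^ ((1:ℝ)-s) := by
    rw [show (1:ℝ)-s = -s+1 by ring, Real.rpow_add_one hr.ne']
    rw [sq, ← mul_assoc ‖X‖⁻¹, inv_mul_cancel₀ hr.ne', one_mul]
  have hcc : (2-s) * (2-s)⁻¹ = 1 := mul_inv_cancel₀ h2s.ne'
  rw [e0, e1, e2, e3, ← e4, hqdef]
  linear_combination (-(((n:ℝ)-2)) * (1 + b*‖X‖^(2-s)) ^ (-(((n:ℝ)-s)/(2-s))) * b * ‖X‖^(-s) * ‖X‖^2 * ‖X‖⁻¹) * hcc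

/-- flux identity. For every `δ > 0`,
`-∫_{∂B(0,δ)} ∂_ν U dσ + ∫_{ℝⁿ∖B(0,δ)} U^{2^*(s)-1}/|X|^s dX` is independent of `δ`
and equals `(n-2) ω_{n-1} 𝔟_{n,s}^{-(n-2)/(2-s)}`. -/
theorem stmt11 (n : ℕ) (hn : 3 ≤ n) (s : ℝ) (hs0 : 0 < s) (hs2 : s < 2) :
    ∀ δ : ℝ, 0 < δ →
      -(sphereIntegral n δ (fun X => ⟪gradient (bubble n s) X, ‖X‖⁻¹ • X⟫))
        + (∫ X in (ball (0 : EuclideanSpace ℝ (Fin n)) δ)ᶜ,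
            bubble n s X ^ (crits n s - 1) / ‖X‖ ^ s)
      = ((n : ℝ) - 2) * omegaS n * bns n s ^ (-(((n : ℝ) - 2) / (2 - s))) := by
  intro δ hδ
  have h3 : (3:ℝ) ≤ (n:ℝ) := by exact_mod_cast hn
  have hns : (0:ℝ) < (n:ℝ) - s := by linarith
  have hn2 : (0:ℝ) < (n:ℝ) - 2 := by linarith
  have h2s : (0:ℝ) < 2 - s := by linarith
  set b := bns n s with hbdef
  have hb : 0 < b := bns_pos n hn s hs2
  set E := EuclideanSpace ℝ (Fin n) with hE
  haveI : Nontrivial E := by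
    have h : 0 < Module.finrank ℝ (EuclideanSpace ℝ (Fin n)) := by
      rw [finrank_euclideanSpace_fin]; omega
    exact Module.nontrivial_of_finrank_pos h
  -- the sphere part
  have hsphere : sphereIntegral n δ (fun X => ⟪gradient (bubble n s) X, ‖X‖⁻¹ • X⟫)
      = δ ^ (n-1) * (omegaS n *
        -(((n:ℝ)-2) * b * δ ^ (1-s) * (1 + b * δ ^ (2-s)) ^ (-(((n:ℝ)-s)/(2-s))))) := by
    rw [sphereIntegral]
    congr 1
    have hptwise : ∀ σ : sphere (0:E) 1,
        ⟪gradient (bubble n s) (δ • (σ:E)), ‖δ • (σ:E)‖⁻¹ • (δ • (σ:E))⟫ =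
        -(((n:ℝ)-2) * b * δ ^ (1-s) * (1 + b * δ ^ (2-s)) ^ (-(((n:ℝ)-s)/(2-s)))) := by
      intro σ
      have hσ1 : ‖(σ:E)‖ = 1 := norm_eq_of_mem_sphere σ
      have hnrm : ‖δ • (σ:E)‖ = δ := by
        rw [norm_smul, hσ1, Real.norm_eq_abs, abs_of_pos hδ, mul_one]
      have hne : δ • (σ:E) ≠ 0 := by
        intro h; rw [h, norm_zero] at hnrm; exact hδ.ne hnrm
      rw [aux_inner n hn s hs0 hs2 hne, hnrm, hbdef]
    calc (∫ σ : sphere (0:E) 1, ⟪gradient (bubble n s) (δ • (σ:E)), ‖δ • (σ:E)‖⁻¹ • (δ • (σ:E))⟫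
          ∂((volume : Measure E).toSphere))
        = ∫ _ : sphere (0:E) 1, -(((n:ℝ)-2) * b * δ ^ (1-s) *
            (1 + b * δ ^ (2-s)) ^ (-(((n:ℝ)-s)/(2-s)))) ∂((volume : Measure E).toSphere) :=
          integral_congr_ae (Eventually.of_forall hptwise)
      _ = omegaS n * -(((n:ℝ)-2) * b * δ ^ (1-s) * (1 + b * δ ^ (2-s)) ^ (-(((n:ℝ)-s)/(2-s)))) := by
          rw [integral_const, smul_eq_mul, omegaS, measureReal_def]
  -- the volume part
  have hvol : (∫ X in (ball (0:E) δ)ᶜ, bubble n s X ^ (crits n s - 1) / ‖X‖ ^ s)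
      = omegaS n * (∫ r in Set.Ioi δ,
          r ^ ((n:ℝ)-1-s) * (1 + b * r ^ (2-s)) ^ (-((((n:ℝ)+2-2*s))/(2-s)))) := by
    set h : ℝ → ℝ := fun r => Set.indicator (Set.Ici δ)
      (fun r => (1 + b * r ^ (2-s)) ^ (-((((n:ℝ)+2-2*s))/(2-s))) / r ^ s) r with hhdef
    have claim1 : ∀ X : E, Set.indicator (ball (0:E) δ)ᶜ
        (fun X => bubble n s X ^ (crits n s - 1) / ‖X‖ ^ s) X = h ‖X‖ := by
      intro X
      by_cases hXb : X ∈ (ball (0:E) δ)ᶜ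
      · have hXn : ‖X‖ ∈ Set.Ici δ :=
          not_lt.1 (by simpa [mem_ball_zero_iff] using hXb)
        rw [Set.indicator_of_mem hXb, hhdef]
        simp only [Set.indicator_of_mem hXn]
        congr 1
        have hA : (0:ℝ) < 1 + b * ‖X‖ ^ (2-s) := by positivity
        rw [bubble, ← hbdef, ← Real.rpow_mul hA.le]
        congr 1
        rw [crits]
        field_simp
        ring
      · have hXmem : X ∈ ball (0:E) δ := by simpa using hXb
        have hXn : ‖X‖ ∉ Set.Ici δ := by
          simp only [Set.mem_Ici, not_le]
          exact mem_ball_zero_iff.1 hXmem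
        rw [Set.indicator_of_notMem hXb, hhdef]
        simp only [Set.indicator_of_notMem hXn]
    have step1 : (∫ X in (ball (0:E) δ)ᶜ, bubble n s X ^ (crits n s - 1) / ‖X‖ ^ s)
        = ∫ X : E, h ‖X‖ := by
      rw [← integral_indicator measurableSet_ball.compl]
      exact integral_congr_ae (Eventually.of_forall claim1)
    have step2 : (∫ X : E, h ‖X‖)
        = (Module.finrank ℝ E) • ((volume : Measure E) (ball 0 1)).toReal •
            ∫ r in Set.Ioi (0:ℝ), r ^ (Module.finrank ℝ E - 1) • h r :=
      integral_fun_norm_addHaar (volume : Measure E) h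
    have hfr : Module.finrank ℝ E = n := finrank_euclideanSpace_fin
    have homega : omegaS n = (n : ℝ) * ((volume : Measure E) (ball 0 1)).toReal := by
      rw [omegaS, Measure.toSphere_apply_univ, hfr, ENNReal.toReal_mul]
      simp
    have step3 : (∫ r in Set.Ioi (0:ℝ), r ^ (n - 1) • h r)
        = ∫ r in Set.Ioi δ, r ^ ((n:ℝ)-1-s) * (1 + b * r ^ (2-s)) ^ (-((((n:ℝ)+2-2*s))/(2-s))) := by
      have hind : ∀ r : ℝ, r ^ (n - 1) • h r = Set.indicator (Set.Ici δ)
          (fun r => r ^ (n - 1) * ((1 + b * r ^ (2-s)) ^ (-((((n:ℝ)+2-2*s))/(2-s))) / r ^ s)) r := by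
        intro r
        by_cases hr : r ∈ Set.Ici δ <;>
          simp [hhdef, Set.indicator_of_mem, Set.indicator_of_notMem, hr]
      rw [integral_congr_ae (Eventually.of_forall fun r => hind r),
        setIntegral_indicator measurableSet_Ici,
        show Set.Ioi 0 ∩ Set.Ici δ = Set.Ici δ from Set.inter_eq_right.2
          (fun x hx => lt_of_lt_of_le hδ hx),
        integral_Ici_eq_integral_Ioi]
      refine setIntegral_congr_fun measurableSet_Ioi fun r hr => ?_
      have hr0 : (0:ℝ) < r := lt_trans hδ hr
      have hpow : (r : ℝ) ^ (n - 1) = r ^ ((n:ℝ)-1) := by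
        rw [← Real.rpow_natCast r (n-1), Nat.cast_sub (by omega), Nat.cast_one]
      have hsplit : r ^ ((n:ℝ)-1-s) = r ^ ((n:ℝ)-1) / r ^ s := by
        rw [show ((n:ℝ)-1-s) = ((n:ℝ)-1) - s by ring, Real.rpow_sub hr0]
      rw [hpow, hsplit, ← mul_div_assoc, div_mul_eq_mul_div]
    rw [step1, step2, hfr, step3, nsmul_eq_mul, smul_eq_mul, homega]
    ring
  -- FTC on the ray
  have hFTC : (∫ r in Set.Ioi δ,
        r ^ ((n:ℝ)-1-s) * (1 + b * r ^ (2-s)) ^ (-((((n:ℝ)+2-2*s))/(2-s))))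
      = ((n:ℝ)-2) * b ^ (-(((n:ℝ)-2)/(2-s)))
        - ((n:ℝ)-2) * b * (δ ^ ((n:ℝ)-s) * (1 + b * δ ^ (2-s)) ^ (-(((n:ℝ)-s)/(2-s)))) := by
    have hder : ∀ x ∈ Set.Ici δ, HasDerivAt (fun r : ℝ => ((n:ℝ)-2) * b *
        (r ^ ((n:ℝ)-s) * (1 + b * r ^ (2-s)) ^ (-(((n:ℝ)-s)/(2-s)))))
        (x ^ ((n:ℝ)-1-s) * (1 + b * x ^ (2-s)) ^ (-((((n:ℝ)+2-2*s))/(2-s)))) x :=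
      fun x hx => aux_deriv n hn s hs0 hs2 (lt_of_lt_of_le hδ hx)
    have hnonneg : ∀ x ∈ Set.Ioi δ,
        0 ≤ x ^ ((n:ℝ)-1-s) * (1 + b * x ^ (2-s)) ^ (-((((n:ℝ)+2-2*s))/(2-s))) := by
      intro x hx
      have hx0 : (0:ℝ) < x := lt_trans hδ hx
      positivity
    have htend : Tendsto (fun r : ℝ => ((n:ℝ)-2) * b *
        (r ^ ((n:ℝ)-s) * (1 + b * r ^ (2-s)) ^ (-(((n:ℝ)-s)/(2-s)))))
        atTop (nhds (((n:ℝ)-2) * b ^ (-(((n:ℝ)-2)/(2-s))))) :=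
      aux_tendsto n hn s hs0 hs2
    exact integral_Ioi_of_hasDerivAt_of_nonneg' hder hnonneg htend
  rw [hsphere, hvol, hFTC]
  -- final algebra
  have hpow : (δ:ℝ) ^ (n - 1) * δ ^ (1-s) = δ ^ ((n:ℝ)-s) := by
    rw [← Real.rpow_natCast δ (n-1), Nat.cast_sub (by omega), Nat.cast_one,
      ← Real.rpow_add hδ]
    congr 1; ring
  have expand : -(δ ^ (n-1) * (omegaS n *
        -(((n:ℝ)-2) * b * δ ^ (1-s) * (1 + b * δ ^ (2-s)) ^ (-(((n:ℝ)-s)/(2-s))))))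
      = omegaS n * (((n:ℝ)-2) * b * (δ ^ (n-1) * δ ^ (1-s)) *
          (1 + b * δ ^ (2-s)) ^ (-(((n:ℝ)-s)/(2-s)))) := by ring
  rw [expand, hpow]
  ring
end

section
/- Let $n = 3$, $s \in (0,2)$, and let $G: B(0,1)\setminus\{0\} \to \mathbb{R}$ be of the form $G(X) = \frac{1}{4\pi|X|} + \beta(X)$, where $\beta \in C^2(B(0,1)\setminus\{0\}) \cap C^{0,\vartheta}(B(0,1))$ for some $\vartheta \in (0,1)$ and $\nabla\beta(X) = o(|X|^{-1})$ as $X \to 0$. Suppose that for all sufficiently small $\delta > 0$: $\delta \int_{\partial B(0,\delta)} \Big( \frac{|\nabla G|^2}{2} + h\frac{G^2}{2} \Big) d\sigma - \frac{1}{\delta}\int_{\partial B(0,\delta)} \Big( (X\cdot\nabla G)^2 + \frac{1}{2}(X\cdot\nabla G)\, G \Big) d\sigma = O(\delta)$, where $h$ is continuous on $B(0,1)$. Then $\beta(0) = 0$. -/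
open MeasureTheory Real Metric Filter RealInnerProductSpace

open Topology

set_option maxHeartbeats 4000000

local notation "E3" => EuclideanSpace ℝ (Fin 3)

lemma hasGradientAt_U0 (X : E3) (hX : X ≠ 0) :
    HasGradientAt (fun Y : E3 => 1 / (4 * π * ‖Y‖)) (-(4 * π * ‖X‖ ^ 3)⁻¹ • X) X := by
  have h0 : 0 < ‖X‖ := norm_pos_iff.mpr hX
  have hπ : (0:ℝ) < π := Real.pi_pos
  have hsq : HasFDerivAt (fun Y : E3 => ‖Y‖ ^ 2) (2 • innerSL ℝ X) X :=
    (hasStrictFDerivAt_norm_sq X).hasFDerivAt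
  have ht0 : ‖X‖ ^ 2 ≠ 0 := by positivity
  have hsqrt : HasDerivAt Real.sqrt (1 / (2 * Real.sqrt (‖X‖ ^ 2))) (‖X‖ ^ 2) :=
    Real.hasDerivAt_sqrt ht0
  have hmul : HasDerivAt (fun t : ℝ => 4 * π * Real.sqrt t)
      (4 * π * (1 / (2 * Real.sqrt (‖X‖ ^ 2)))) (‖X‖ ^ 2) := hsqrt.const_mul _
  have hne : 4 * π * Real.sqrt (‖X‖ ^ 2) ≠ 0 := by
    rw [Real.sqrt_sq (norm_nonneg X)]; positivity
  have hinv : HasDerivAt (fun t : ℝ => (4 * π * Real.sqrt t)⁻¹)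
      (-(4 * π * (1 / (2 * Real.sqrt (‖X‖ ^ 2)))) / (4 * π * Real.sqrt (‖X‖ ^ 2)) ^ 2)
      (‖X‖ ^ 2) := hmul.inv hne
  have hcomp := hinv.comp_hasFDerivAt X hsq
  rw [hasGradientAt_iff_hasFDerivAt]
  convert hcomp using 2 with Y
  · rfl
  · simp only [Function.comp_apply, Real.sqrt_sq (norm_nonneg Y), one_div]
  · ext y
    rw [Real.sqrt_sq (norm_nonneg X)]
    simp only [InnerProductSpace.toDual_apply_apply, ContinuousLinearMap.smul_apply,
      ContinuousLinearMap.smul_apply, innerSL_apply_apply, real_inner_smul_left, smul_eq_mul]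
    field_simp
    ring

lemma gradG_eq (G β : E3 → ℝ)
    (hG : ∀ X ∈ ball (0:E3) 1 \ {0}, G X = 1/(4*π*‖X‖) + β X)
    (hβ2 : ContDiffOn ℝ 2 β (ball (0:E3) 1 \ {0}))
    {X : E3} (hX : X ∈ ball (0:E3) 1 \ {0}) :
    gradient G X = -(4*π*‖X‖^3)⁻¹ • X + gradient β X := by
  have hs : IsOpen (ball (0:E3) 1 \ {0}) := isOpen_ball.sdiff isClosed_singleton
  have hXne : X ≠ 0 := by simpa using hX.2
  have hnb : (ball (0:E3) 1 \ {0}) ∈ 𝓝 X := hs.mem_nhds hX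
  have hβd : DifferentiableAt ℝ β X :=
    (hβ2.contDiffAt hnb).differentiableAt (by norm_num)
  have h1 := hasGradientAt_U0 X hXne
  have h2 := hβd.hasGradientAt
  rw [hasGradientAt_iff_hasFDerivAt] at h1 h2
  have h4 : HasGradientAt (fun Y : E3 => 1/(4*π*‖Y‖) + β Y)
      ((-(4*π*‖X‖^3)⁻¹ • X) + gradient β X) X := by
    rw [hasGradientAt_iff_hasFDerivAt, map_add]; exact h1.add h2
  have h5 : HasGradientAt G ((-(4*π*‖X‖^3)⁻¹ • X) + gradient β X) X :=
    h4.congr_of_eventuallyEq (Filter.eventuallyEq_of_mem hnb hG)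
  exact h5.gradient

lemma gradβ_contOn (β : E3 → ℝ)
    (hβ2 : ContDiffOn ℝ 2 β (ball (0:E3) 1 \ {0})) :
    ContinuousOn (fun X => gradient β X) (ball (0:E3) 1 \ {0}) := by
  have hs : IsOpen (ball (0:E3) 1 \ {0}) := isOpen_ball.sdiff isClosed_singleton
  have h1 : ContinuousOn (fderiv ℝ β) (ball (0:E3) 1 \ {0}) :=
    hβ2.continuousOn_fderiv_of_isOpen hs (by norm_num)
  exact (InnerProductSpace.toDual ℝ E3).symm.continuous.comp_continuousOn h1

lemma sphere_integrable {f : sphere (0:E3) 1 → ℝ} (hf : Continuous f) :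
    Integrable f ((volume : Measure E3).toSphere) := by
  have hcs : HasCompactSupport f :=
    IsCompact.of_isClosed_subset isCompact_univ (isClosed_tsupport f) (Set.subset_univ _)
  exact hf.integrable_of_hasCompactSupport hcs

lemma omegaS3_pos : (0:ℝ) < omegaS 3 := by
  refine ENNReal.toReal_pos ?_ (measure_ne_top _ _)
  rw [Measure.toSphere_apply_univ]
  simp only [ne_eq, mul_eq_zero, not_or]
  exact ⟨by simp [finrank_euclideanSpace_fin], (measure_ball_pos _ _ one_pos).ne'⟩

set_option maxHeartbeats 2000000 in
lemma core (G β h : E3 → ℝ)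
    (hG : ∀ X ∈ ball (0:E3) 1 \ {0}, G X = 1/(4*π*‖X‖) + β X)
    (hβ2 : ContDiffOn ℝ 2 β (ball (0:E3) 1 \ {0}))
    (hh : ContinuousOn h (ball (0:E3) 1))
    (δ : ℝ) (hδ0 : 0 < δ) (hδ1 : δ < 1) :
    δ * sphereIntegral 3 δ (fun X => ‖gradient G X‖ ^ 2 / 2 + h X * G X ^ 2 / 2)
      - δ⁻¹ * sphereIntegral 3 δ (fun X =>
          ⟪X, gradient G X⟫ ^ 2 + (1 / 2) * ⟪X, gradient G X⟫ * G X)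
      - omegaS 3 * (β 0 / (8 * π))
    = ∫ σ : sphere (0:E3) 1,
        ((β (δ • (σ:E3)) - β 0)/(8*π)
          + ⟪δ • (σ:E3), gradient β (δ • (σ:E3))⟫/(8*π)
          + δ^3*‖gradient β (δ • (σ:E3))‖^2/2
          + δ^3*(h (δ • (σ:E3)))*(1/(4*π*δ) + β (δ • (σ:E3)))^2/2
          - δ*⟪δ • (σ:E3), gradient β (δ • (σ:E3))⟫^2
          - δ*⟪δ • (σ:E3), gradient β (δ • (σ:E3))⟫*(β (δ • (σ:E3)))/2)
        ∂((volume : Measure E3).toSphere) := by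
  have hπ : (0:ℝ) < π := Real.pi_pos
  have hnX : ∀ σ : sphere (0:E3) 1, ‖δ • (σ:E3)‖ = δ := by
    intro σ
    rw [norm_smul, norm_eq_of_mem_sphere σ, Real.norm_eq_abs, abs_of_pos hδ0, mul_one]
  have hmem : ∀ σ : sphere (0:E3) 1, δ • (σ:E3) ∈ ball (0:E3) 1 \ {0} := by
    intro σ
    constructor
    · rw [mem_ball_zero_iff, hnX σ]; exact hδ1
    · simp only [Set.mem_singleton_iff]
      intro hc
      have := hnX σ
      rw [hc] at this
      simp at this
      exact hδ0.ne' this.symm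
  -- explicit forms of the integrands
  have hrw1 : ∀ σ : sphere (0:E3) 1,
      ‖gradient G (δ • (σ:E3))‖ ^ 2 / 2 + h (δ • (σ:E3)) * G (δ • (σ:E3)) ^ 2 / 2
      = (((4*π*δ^3)⁻¹)^2*δ^2 + 2*(-(4*π*δ^3)⁻¹ * ⟪δ • (σ:E3), gradient β (δ • (σ:E3))⟫)
          + ‖gradient β (δ • (σ:E3))‖^2)/2
        + h (δ • (σ:E3)) * (1/(4*π*δ) + β (δ • (σ:E3)))^2/2 := by
    intro σ
    rw [gradG_eq G β hG hβ2 (hmem σ), hG _ (hmem σ), hnX σ, norm_add_sq_real, norm_smul,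
      real_inner_smul_left, hnX σ, mul_pow, Real.norm_eq_abs, sq_abs, neg_pow]
    ring
  have hrw2 : ∀ σ : sphere (0:E3) 1,
      ⟪δ • (σ:E3), gradient G (δ • (σ:E3))⟫ = -((4*π*δ^3)⁻¹*δ^2)
        + ⟪δ • (σ:E3), gradient β (δ • (σ:E3))⟫ := by
    intro σ
    rw [gradG_eq G β hG hβ2 (hmem σ), hnX σ, inner_add_right, real_inner_smul_right,
      real_inner_self_eq_norm_sq, hnX σ]
    ring
  -- continuity of components
  have c1 : Continuous fun σ : sphere (0:E3) 1 => δ • (σ:E3) :=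
    continuous_subtype_val.const_smul δ
  have cw : Continuous fun σ : sphere (0:E3) 1 => gradient β (δ • (σ:E3)) :=
    (gradβ_contOn β hβ2).comp_continuous c1 hmem
  have cβ : Continuous fun σ : sphere (0:E3) 1 => β (δ • (σ:E3)) :=
    (hβ2.continuousOn).comp_continuous c1 hmem
  have ch : Continuous fun σ : sphere (0:E3) 1 => h (δ • (σ:E3)) :=
    hh.comp_continuous c1 (fun σ => (hmem σ).1)
  have cI : Continuous fun σ : sphere (0:E3) 1 => ⟪δ • (σ:E3), gradient β (δ • (σ:E3))⟫ :=
    c1.inner cw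
  have cg1 : Continuous fun σ : sphere (0:E3) 1 =>
      (((4*π*δ^3)⁻¹)^2*δ^2 + 2*(-(4*π*δ^3)⁻¹ * ⟪δ • (σ:E3), gradient β (δ • (σ:E3))⟫)
          + ‖gradient β (δ • (σ:E3))‖^2)/2
        + h (δ • (σ:E3)) * (1/(4*π*δ) + β (δ • (σ:E3)))^2/2 :=
    (((continuous_const.add (continuous_const.mul (continuous_const.mul cI))).add
      (cw.norm.pow 2)).div_const 2).add
      ((ch.mul ((continuous_const.add cβ).pow 2)).div_const 2)
  have cg2 : Continuous fun σ : sphere (0:E3) 1 =>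
      (-((4*π*δ^3)⁻¹*δ^2) + ⟪δ • (σ:E3), gradient β (δ • (σ:E3))⟫)^2
        + (1/2)*(-((4*π*δ^3)⁻¹*δ^2) + ⟪δ • (σ:E3), gradient β (δ • (σ:E3))⟫)
            *(1/(4*π*δ) + β (δ • (σ:E3))) :=
    ((continuous_const.add cI).pow 2).add
      (((continuous_const.mul (continuous_const.add cI))).mul (continuous_const.add cβ))
  have ig1 := sphere_integrable cg1
  have ig2 := sphere_integrable cg2
  -- rewrite the sphere integrals
  have hEq1 : sphereIntegral 3 δ (fun X => ‖gradient G X‖ ^ 2 / 2 + h X * G X ^ 2 / 2)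
      = δ^2 * ∫ σ : sphere (0:E3) 1,
          ((((4*π*δ^3)⁻¹)^2*δ^2 + 2*(-(4*π*δ^3)⁻¹ * ⟪δ • (σ:E3), gradient β (δ • (σ:E3))⟫)
            + ‖gradient β (δ • (σ:E3))‖^2)/2
          + h (δ • (σ:E3)) * (1/(4*π*δ) + β (δ • (σ:E3)))^2/2)
          ∂((volume : Measure E3).toSphere) := by
    rw [sphereIntegral]
    congr 1
    exact integral_congr_ae (Filter.Eventually.of_forall fun σ => hrw1 σ)
  have hEq2 : sphereIntegral 3 δ (fun X =>
        ⟪X, gradient G X⟫ ^ 2 + (1 / 2) * ⟪X, gradient G X⟫ * G X)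
      = δ^2 * ∫ σ : sphere (0:E3) 1,
          ((-((4*π*δ^3)⁻¹*δ^2) + ⟪δ • (σ:E3), gradient β (δ • (σ:E3))⟫)^2
            + (1/2)*(-((4*π*δ^3)⁻¹*δ^2) + ⟪δ • (σ:E3), gradient β (δ • (σ:E3))⟫)
                *(1/(4*π*δ) + β (δ • (σ:E3))))
          ∂((volume : Measure E3).toSphere) := by
    rw [sphereIntegral]
    congr 1
    refine integral_congr_ae (Filter.Eventually.of_forall fun σ => ?_)
    simp only
    rw [hrw2 σ, hG _ (hmem σ), hnX σ]
  have hconst : omegaS 3 * (β 0 / (8 * π))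
      = ∫ _σ : sphere (0:E3) 1, (β 0 / (8*π)) ∂((volume : Measure E3).toSphere) := by
    rw [integral_const, smul_eq_mul, omegaS]
    rfl
  rw [hEq1, hEq2, hconst]
  rw [show δ * (δ^2 * ∫ σ : sphere (0:E3) 1,
          ((((4*π*δ^3)⁻¹)^2*δ^2 + 2*(-(4*π*δ^3)⁻¹ * ⟪δ • (σ:E3), gradient β (δ • (σ:E3))⟫)
            + ‖gradient β (δ • (σ:E3))‖^2)/2
          + h (δ • (σ:E3)) * (1/(4*π*δ) + β (δ • (σ:E3)))^2/2)
          ∂((volume : Measure E3).toSphere))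
      = ∫ σ : sphere (0:E3) 1, δ^3 *
          (((((4*π*δ^3)⁻¹)^2*δ^2 + 2*(-(4*π*δ^3)⁻¹ * ⟪δ • (σ:E3), gradient β (δ • (σ:E3))⟫)
            + ‖gradient β (δ • (σ:E3))‖^2)/2
          + h (δ • (σ:E3)) * (1/(4*π*δ) + β (δ • (σ:E3)))^2/2))
          ∂((volume : Measure E3).toSphere) from by
        rw [integral_const_mul, ← mul_assoc]
        congr 1
        ring]
  rw [show δ⁻¹ * (δ^2 * ∫ σ : sphere (0:E3) 1,
          ((-((4*π*δ^3)⁻¹*δ^2) + ⟪δ • (σ:E3), gradient β (δ • (σ:E3))⟫)^2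
            + (1/2)*(-((4*π*δ^3)⁻¹*δ^2) + ⟪δ • (σ:E3), gradient β (δ • (σ:E3))⟫)
                *(1/(4*π*δ) + β (δ • (σ:E3))))
          ∂((volume : Measure E3).toSphere))
      = ∫ σ : sphere (0:E3) 1, δ *
          ((-((4*π*δ^3)⁻¹*δ^2) + ⟪δ • (σ:E3), gradient β (δ • (σ:E3))⟫)^2
            + (1/2)*(-((4*π*δ^3)⁻¹*δ^2) + ⟪δ • (σ:E3), gradient β (δ • (σ:E3))⟫)
                *(1/(4*π*δ) + β (δ • (σ:E3))))
          ∂((volume : Measure E3).toSphere) from by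
        rw [integral_const_mul, ← mul_assoc]
        congr 1
        have hδ' : δ ≠ 0 := hδ0.ne'
        field_simp]
  have hsub1 : (∫ σ : sphere (0:E3) 1, (δ^3 *
          (((((4*π*δ^3)⁻¹)^2*δ^2 + 2*(-(4*π*δ^3)⁻¹ * ⟪δ • (σ:E3), gradient β (δ • (σ:E3))⟫)
            + ‖gradient β (δ • (σ:E3))‖^2)/2
          + h (δ • (σ:E3)) * (1/(4*π*δ) + β (δ • (σ:E3)))^2/2))
        - δ *
          ((-((4*π*δ^3)⁻¹*δ^2) + ⟪δ • (σ:E3), gradient β (δ • (σ:E3))⟫)^2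
            + (1/2)*(-((4*π*δ^3)⁻¹*δ^2) + ⟪δ • (σ:E3), gradient β (δ • (σ:E3))⟫)
                *(1/(4*π*δ) + β (δ • (σ:E3)))))
          ∂((volume : Measure E3).toSphere))
      = (∫ σ : sphere (0:E3) 1, δ^3 *
          (((((4*π*δ^3)⁻¹)^2*δ^2 + 2*(-(4*π*δ^3)⁻¹ * ⟪δ • (σ:E3), gradient β (δ • (σ:E3))⟫)
            + ‖gradient β (δ • (σ:E3))‖^2)/2
          + h (δ • (σ:E3)) * (1/(4*π*δ) + β (δ • (σ:E3)))^2/2))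
          ∂((volume : Measure E3).toSphere))
        - ∫ σ : sphere (0:E3) 1, δ *
          ((-((4*π*δ^3)⁻¹*δ^2) + ⟪δ • (σ:E3), gradient β (δ • (σ:E3))⟫)^2
            + (1/2)*(-((4*π*δ^3)⁻¹*δ^2) + ⟪δ • (σ:E3), gradient β (δ • (σ:E3))⟫)
                *(1/(4*π*δ) + β (δ • (σ:E3))))
          ∂((volume : Measure E3).toSphere) :=
    integral_sub (ig1.const_mul _) (ig2.const_mul _)
  have hsub2 : (∫ σ : sphere (0:E3) 1, ((δ^3 *
          (((((4*π*δ^3)⁻¹)^2*δ^2 + 2*(-(4*π*δ^3)⁻¹ * ⟪δ • (σ:E3), gradient β (δ • (σ:E3))⟫)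
            + ‖gradient β (δ • (σ:E3))‖^2)/2
          + h (δ • (σ:E3)) * (1/(4*π*δ) + β (δ • (σ:E3)))^2/2))
        - δ *
          ((-((4*π*δ^3)⁻¹*δ^2) + ⟪δ • (σ:E3), gradient β (δ • (σ:E3))⟫)^2
            + (1/2)*(-((4*π*δ^3)⁻¹*δ^2) + ⟪δ • (σ:E3), gradient β (δ • (σ:E3))⟫)
                *(1/(4*π*δ) + β (δ • (σ:E3)))))
        - β 0 / (8*π))
          ∂((volume : Measure E3).toSphere))
      = (∫ σ : sphere (0:E3) 1, (δ^3 *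
          (((((4*π*δ^3)⁻¹)^2*δ^2 + 2*(-(4*π*δ^3)⁻¹ * ⟪δ • (σ:E3), gradient β (δ • (σ:E3))⟫)
            + ‖gradient β (δ • (σ:E3))‖^2)/2
          + h (δ • (σ:E3)) * (1/(4*π*δ) + β (δ • (σ:E3)))^2/2))
        - δ *
          ((-((4*π*δ^3)⁻¹*δ^2) + ⟪δ • (σ:E3), gradient β (δ • (σ:E3))⟫)^2
            + (1/2)*(-((4*π*δ^3)⁻¹*δ^2) + ⟪δ • (σ:E3), gradient β (δ • (σ:E3))⟫)
                *(1/(4*π*δ) + β (δ • (σ:E3)))))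
          ∂((volume : Measure E3).toSphere))
        - ∫ _σ : sphere (0:E3) 1, (β 0 / (8*π)) ∂((volume : Measure E3).toSphere) :=
    integral_sub ((ig1.const_mul _).sub (ig2.const_mul _)) (integrable_const _)
  rw [← hsub1, ← hsub2]
  refine integral_congr_ae (Filter.Eventually.of_forall fun σ => ?_)
  simp only [Pi.sub_apply]
  have hπ' : π ≠ 0 := Real.pi_ne_zero
  have hδ' : δ ≠ 0 := hδ0.ne'
  field_simp
  ring

/-- mass-vanishing in dimension 3. If `G = 1/(4π|X|) + β` with `β` Hölder
continuous and `∇β = o(|X|⁻¹)`, and the Pohozaev boundary quantity is `O(δ)`, then the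
mass `β(0)` vanishes. -/
theorem stmt19 (s : ℝ) (hs0 : 0 < s) (hs2 : s < 2)
    (G β : EuclideanSpace ℝ (Fin 3) → ℝ) (ϑ : ℝ) (hϑ0 : 0 < ϑ) (hϑ1 : ϑ < 1)
    (hG : ∀ X ∈ ball (0 : EuclideanSpace ℝ (Fin 3)) 1 \ {0},
      G X = 1 / (4 * π * ‖X‖) + β X)
    (hβ2 : ContDiffOn ℝ 2 β (ball (0 : EuclideanSpace ℝ (Fin 3)) 1 \ {0}))
    (hβHold : ∃ C : ℝ, 0 ≤ C ∧ ∀ x ∈ ball (0 : EuclideanSpace ℝ (Fin 3)) 1,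
      ∀ y ∈ ball (0 : EuclideanSpace ℝ (Fin 3)) 1, |β x - β y| ≤ C * dist x y ^ ϑ)
    (hβgrad : Tendsto (fun X : EuclideanSpace ℝ (Fin 3) => ‖X‖ * ‖gradient β X‖)
      (nhdsWithin 0 {0}ᶜ) (nhds 0))
    (h : EuclideanSpace ℝ (Fin 3) → ℝ)
    (hh : ContinuousOn h (ball (0 : EuclideanSpace ℝ (Fin 3)) 1))
    (hPoho : ∃ δ0 : ℝ, 0 < δ0 ∧ ∃ C : ℝ, ∀ δ ∈ Set.Ioo (0 : ℝ) δ0,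
      |δ * sphereIntegral 3 δ (fun X => ‖gradient G X‖ ^ 2 / 2 + h X * G X ^ 2 / 2)
        - δ⁻¹ * sphereIntegral 3 δ (fun X =>
            ⟪X, gradient G X⟫ ^ 2 + (1 / 2) * ⟪X, gradient G X⟫ * G X)| ≤ C * δ) :
    β 0 = 0 := by
  have hπ : (0:ℝ) < π := Real.pi_pos
  obtain ⟨C, hC0, hCH⟩ := hβHold
  obtain ⟨δ0, hδ00, C₁, hP⟩ := hPoho
  have hM : ∀ X ∈ ball (0:E3) 1, |β X| ≤ |β 0| + C := by
    intro X hX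
    have h1 := hCH X hX 0 (mem_ball_self one_pos)
    have h2 : dist X 0 ^ ϑ ≤ 1 :=
      Real.rpow_le_one dist_nonneg (le_of_lt (mem_ball.mp hX)) hϑ0.le
    have h3 : |β X| - |β 0| ≤ |β X - β 0| := abs_sub_abs_le_abs_sub _ _
    nlinarith [mul_le_mul_of_nonneg_left h2 hC0]
  obtain ⟨H0, hH0⟩ := (isCompact_closedBall (0:E3) (1/2)).exists_bound_of_continuousOn
    (hh.mono (closedBall_subset_ball (by norm_num)))
  have hH : ∀ X ∈ closedBall (0:E3) (1/2), |h X| ≤ |H0| := by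
    intro X hX
    calc |h X| = ‖h X‖ := (Real.norm_eq_abs _).symm
      _ ≤ H0 := hH0 X hX
      _ ≤ |H0| := le_abs_self _
  have h8π : (0:ℝ) < 8 * π := by positivity
  have h4π : (0:ℝ) < 1/(4*π) := by positivity
  -- the key estimate for each small ε'
  have keyε : ∀ ε' ∈ Set.Ioc (0:ℝ) 1, |omegaS 3 * (β 0 / (8 * π))|
      ≤ (ε'/(8*π) + ε'/2 + ε' + ε'*(|β 0| + C)/2) * omegaS 3 := by
    intro ε' hε'
    have he1 : 0 < ε' := hε'.1
    have he2 : ε' ≤ 1 := hε'.2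
    obtain ⟨r, hr0, hr⟩ := Metric.tendsto_nhdsWithin_nhds.mp hβgrad ε' he1
    have hδ1pos : 0 < min (min δ0 (1/2)) r := lt_min (lt_min hδ00 (by norm_num)) hr0
    have hEst : ∀ δ ∈ Set.Ioo (0:ℝ) (min (min δ0 (1/2)) r),
        |omegaS 3 * (β 0 / (8 * π))| ≤ C₁*δ +
          (C*δ^ϑ/(8*π) + (ε'/(8*π) + ε'/2 + ε' + ε'*(|β 0| + C)/2)
            + δ*(|H0| *(1/(4*π)+(|β 0| + C))^2/2)) * omegaS 3 := by
      intro δ hδ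
      have hδpos : 0 < δ := hδ.1
      have hδhalf : δ ≤ 1/2 :=
        le_of_lt (lt_of_lt_of_le hδ.2 ((min_le_left _ _).trans (min_le_right _ _)))
      have hδ1' : δ < 1 := lt_of_le_of_lt hδhalf (by norm_num)
      have hδle1 : δ ≤ 1 := hδ1'.le
      have hδr : δ < r := lt_of_lt_of_le hδ.2 (min_le_right _ _)
      have hδδ0 : δ < δ0 := lt_of_lt_of_le hδ.2 ((min_le_left _ _).trans (min_le_left _ _))
      have hcore := core G β h hG hβ2 hh δ hδpos hδ1'
      have hPδ := hP δ ⟨hδpos, hδδ0⟩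
      -- pointwise bound of the integrand
      have hpt : ∀ σ : sphere (0:E3) 1,
          ‖(β (δ • (σ:E3)) - β 0)/(8*π)
            + ⟪δ • (σ:E3), gradient β (δ • (σ:E3))⟫/(8*π)
            + δ^3*‖gradient β (δ • (σ:E3))‖^2/2
            + δ^3*(h (δ • (σ:E3)))*(1/(4*π*δ) + β (δ • (σ:E3)))^2/2
            - δ*⟪δ • (σ:E3), gradient β (δ • (σ:E3))⟫^2
            - δ*⟪δ • (σ:E3), gradient β (δ • (σ:E3))⟫*(β (δ • (σ:E3)))/2‖
          ≤ C*δ^ϑ/(8*π) + (ε'/(8*π) + ε'/2 + ε' + ε'*(|β 0| + C)/2)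
              + δ*(|H0| *(1/(4*π)+(|β 0| + C))^2/2) := by
        intro σ
        rw [Real.norm_eq_abs]
        have hXn : ‖δ • (σ:E3)‖ = δ := by
          rw [norm_smul, norm_eq_of_mem_sphere σ, Real.norm_eq_abs, abs_of_pos hδpos, mul_one]
        set X := δ • (σ:E3) with hXdef
        have hXb : X ∈ ball (0:E3) 1 := by rw [mem_ball_zero_iff, hXn]; exact hδ1'
        have hXne : X ≠ 0 := by
          intro h0; rw [h0, norm_zero] at hXn; exact hδpos.ne hXn
        have hq : δ * ‖gradient β X‖ < ε' := by
          have h1 := hr (show X ∈ ({0}ᶜ : Set E3) from hXne)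
            (by rw [dist_zero_right, hXn]; exact hδr)
          rw [Real.dist_0_eq_abs, abs_of_nonneg (mul_nonneg (norm_nonneg _) (norm_nonneg _)),
            hXn] at h1
          exact h1
        have hqn : 0 ≤ δ * ‖gradient β X‖ := mul_nonneg hδpos.le (norm_nonneg _)
        have hp : |⟪X, gradient β X⟫| ≤ δ * ‖gradient β X‖ := by
          have := abs_real_inner_le_norm X (gradient β X)
          rwa [hXn] at this
        have hpe : |⟪X, gradient β X⟫| ≤ ε' := hp.trans hq.le
        have hb : |β X| ≤ |β 0| + C := hM X hXb
        have hbb : |β X - β 0| ≤ C * δ^ϑ := by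
          have := hCH X hXb 0 (mem_ball_self one_pos)
          rwa [dist_zero_right, hXn] at this
        have hhX : |h X| ≤ |H0| := by
          apply hH
          rw [mem_closedBall_zero_iff, hXn]; exact hδhalf
        have hq2 : (δ * ‖gradient β X‖)^2 ≤ ε'^2 := pow_le_pow_left₀ hqn hq.le 2
        -- term bounds
        have t1 : |(β X - β 0)/(8*π)| ≤ C*δ^ϑ/(8*π) := by
          rw [abs_div, abs_of_pos h8π]
          exact (div_le_div_iff_of_pos_right h8π).mpr hbb
        have t2 : |⟪X, gradient β X⟫/(8*π)| ≤ ε'/(8*π) := by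
          rw [abs_div, abs_of_pos h8π]
          exact (div_le_div_iff_of_pos_right h8π).mpr hpe
        have t3 : δ^3*‖gradient β X‖^2/2 ≤ ε'/2 := by
          nlinarith [norm_nonneg (gradient β X), hq2, sq_nonneg (δ * ‖gradient β X‖),
            mul_nonneg (sub_nonneg.mpr hδle1) (sq_nonneg (δ * ‖gradient β X‖)),
            mul_nonneg (sub_nonneg.mpr he2) he1.le]
        have t3n : 0 ≤ δ^3*‖gradient β X‖^2/2 :=
          div_nonneg (mul_nonneg (pow_nonneg hδpos.le 3) (sq_nonneg _)) (by norm_num)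
        have t5 : δ*⟪X, gradient β X⟫^2 ≤ ε' := by
          nlinarith [pow_le_pow_left₀ (abs_nonneg (⟪X, gradient β X⟫)) hpe 2,
            sq_abs (⟪X, gradient β X⟫), sq_nonneg (⟪X, gradient β X⟫),
            mul_nonneg (sub_nonneg.mpr hδle1) (sq_nonneg (⟪X, gradient β X⟫)),
            mul_nonneg (sub_nonneg.mpr he2) he1.le]
        have t5n : 0 ≤ δ*⟪X, gradient β X⟫^2 := mul_nonneg hδpos.le (sq_nonneg _)
        have t6 : |δ*⟪X, gradient β X⟫*(β X)/2| ≤ ε'*(|β 0| + C)/2 := by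
          rw [abs_div, abs_mul, abs_mul, abs_of_pos hδpos, abs_two]
          have h1 : |⟪X, gradient β X⟫| * |β X| ≤ ε' * (|β 0| + C) :=
            mul_le_mul hpe hb (abs_nonneg _) he1.le
          have h2 : δ * |⟪X, gradient β X⟫| * |β X| ≤ ε' * (|β 0| + C) := by
            nlinarith [abs_nonneg (⟪X, gradient β X⟫), abs_nonneg (β X),
              mul_nonneg (abs_nonneg (⟪X, gradient β X⟫)) (abs_nonneg (β X))]
          linarith [h2]
        have hδb : |δ * β X| ≤ |β 0| + C := by
          rw [abs_mul, abs_of_pos hδpos]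
          nlinarith [abs_nonneg (β X)]
        obtain ⟨hδb1, hδb2⟩ := abs_le.mp hδb
        have hsq : (1/(4*π)+δ*β X)^2 ≤ (1/(4*π)+(|β 0| + C))^2 := by
          apply sq_le_sq'
          · nlinarith
          · nlinarith
        have t4 : |δ^3*(h X)*(1/(4*π*δ) + β X)^2/2| ≤ δ*(|H0| *(1/(4*π)+(|β 0| + C))^2/2) := by
          have hid4 : δ^3*(h X)*(1/(4*π*δ) + β X)^2/2 = δ*((h X)*(1/(4*π)+δ*β X)^2/2) := by
            field_simp
          rw [hid4, abs_mul, abs_of_pos hδpos]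
          apply mul_le_mul_of_nonneg_left _ hδpos.le
          rw [abs_div, abs_mul, abs_two, abs_sq]
          have := mul_le_mul hhX hsq (sq_nonneg _) (abs_nonneg H0)
          linarith
        obtain ⟨t1a, t1b⟩ := abs_le.mp t1
        obtain ⟨t2a, t2b⟩ := abs_le.mp t2
        obtain ⟨t4a, t4b⟩ := abs_le.mp t4
        obtain ⟨t6a, t6b⟩ := abs_le.mp t6
        refine abs_le.mpr ⟨by linarith, by linarith⟩
      have habs := norm_integral_le_of_norm_le_const (μ := (volume : Measure E3).toSphere)
        (Filter.Eventually.of_forall hpt)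
      rw [Real.norm_eq_abs] at habs
      have hω' : ((volume : Measure E3).toSphere).real Set.univ = omegaS 3 := rfl
      rw [hω'] at habs
      rw [← hcore] at habs
      obtain ⟨hP1, hP2⟩ := abs_le.mp hPδ
      obtain ⟨hA1, hA2⟩ := abs_le.mp habs
      refine abs_le.mpr ⟨by linarith, by linarith⟩
    -- take δ → 0
    have hrpow : Tendsto (fun x : ℝ => x ^ ϑ) (𝓝[>] (0:ℝ)) (𝓝 ((0:ℝ) ^ ϑ)) :=
      ((Real.continuousAt_rpow_const 0 ϑ (Or.inr hϑ0.le)).tendsto).mono_left nhdsWithin_le_nhds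
    have hid : Tendsto (fun δ : ℝ => δ) (𝓝[>] (0:ℝ)) (𝓝 0) :=
      tendsto_id.mono_left nhdsWithin_le_nhds
    have hlim : Tendsto (fun δ : ℝ => C₁*δ +
        (C*δ^ϑ/(8*π) + (ε'/(8*π) + ε'/2 + ε' + ε'*(|β 0| + C)/2)
          + δ*(|H0| *(1/(4*π)+(|β 0| + C))^2/2)) * omegaS 3) (𝓝[>] (0:ℝ))
        (𝓝 (C₁*0 + (C*(0:ℝ)^ϑ/(8*π) + (ε'/(8*π) + ε'/2 + ε' + ε'*(|β 0| + C)/2)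
          + 0*(|H0| *(1/(4*π)+(|β 0| + C))^2/2)) * omegaS 3)) := by
      exact (hid.const_mul C₁).add
        ((((hrpow.const_mul C).div_const (8*π)).add tendsto_const_nhds |>.add
          (hid.mul_const _)).mul_const _)
    have hev : ∀ᶠ δ in 𝓝[>] (0:ℝ), |omegaS 3 * (β 0 / (8 * π))| ≤ C₁*δ +
          (C*δ^ϑ/(8*π) + (ε'/(8*π) + ε'/2 + ε' + ε'*(|β 0| + C)/2)
            + δ*(|H0| *(1/(4*π)+(|β 0| + C))^2/2)) * omegaS 3 := by
      filter_upwards [Ioo_mem_nhdsGT_of_mem ⟨le_refl (0:ℝ), hδ1pos⟩] with δ hδ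
      exact hEst δ hδ
    have hle := ge_of_tendsto hlim hev
    calc |omegaS 3 * (β 0 / (8 * π))|
        ≤ C₁*0 + (C*(0:ℝ)^ϑ/(8*π) + (ε'/(8*π) + ε'/2 + ε' + ε'*(|β 0| + C)/2)
          + 0*(|H0| *(1/(4*π)+(|β 0| + C))^2/2)) * omegaS 3 := hle
      _ = (ε'/(8*π) + ε'/2 + ε' + ε'*(|β 0| + C)/2) * omegaS 3 := by
          rw [Real.zero_rpow hϑ0.ne']; ring
  -- take ε' → 0
  have hid : Tendsto (fun x : ℝ => x) (𝓝[>] (0:ℝ)) (𝓝 0) :=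
    tendsto_id.mono_left nhdsWithin_le_nhds
  have hlim2 : Tendsto (fun ε' : ℝ => (ε'/(8*π) + ε'/2 + ε' + ε'*(|β 0| + C)/2) * omegaS 3)
      (𝓝[>] (0:ℝ))
      (𝓝 (((0:ℝ)/(8*π) + (0:ℝ)/2 + 0 + (0:ℝ)*(|β 0| + C)/2) * omegaS 3)) :=
    ((((hid.div_const (8*π)).add (hid.div_const 2)).add hid).add
      ((hid.mul_const _).div_const 2)).mul_const _
  have hL0 : |omegaS 3 * (β 0 / (8 * π))| ≤ 0 := by
    have hev2 : ∀ᶠ ε' in 𝓝[>] (0:ℝ), |omegaS 3 * (β 0 / (8 * π))|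
        ≤ (ε'/(8*π) + ε'/2 + ε' + ε'*(|β 0| + C)/2) * omegaS 3 := by
      filter_upwards [Ioc_mem_nhdsGT_of_mem ⟨le_refl (0:ℝ), one_pos⟩] with ε' hε'
      exact keyε ε' hε'
    have hle := ge_of_tendsto hlim2 hev2
    calc |omegaS 3 * (β 0 / (8 * π))|
        ≤ ((0:ℝ)/(8*π) + (0:ℝ)/2 + 0 + (0:ℝ)*(|β 0| + C)/2) * omegaS 3 := hle
      _ = 0 := by ring
  have hLzero : omegaS 3 * (β 0 / (8 * π)) = 0 :=
    abs_eq_zero.mp (le_antisymm hL0 (abs_nonneg _))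
  rcases mul_eq_zero.mp hLzero with hc | hc
  · exact absurd hc omegaS3_pos.ne'
  · rcases div_eq_zero_iff.mp hc with hc' | hc'
    · exact hc'
    · exact absurd hc' h8π.ne'
end
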